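/- Let S = { (⌊⌊w⌋⌋, w), (⌊uv⌋, ⌊v⌋⌊u⌋), (⌊1⌋, 1) : w ∈ 𝔐(X), u,v ∈ 𝔐(X)\{1} }. For rules α, β ∈ S with q₁|_{lhs(α)} = q₂|_{lhs(β)}, if the placements (lhs(α), q₁) and (lhs(β), q₂) are nested, then q₁|_{rhs(α)} and q₂|_{rhs(β)} are joinable under Π_S. -/

import Mathlib

namespace OpMon

/-- Letters of bracketed words: either a variable or a bracketed word. -/
inductive Letter (X : Type) : Type
  | of : X → Letter X
  | br : List (Letter X) → Letter X

/-- The free operated monoid `𝔐(X)`, modeled as lists of letters (free monoid on letters). -/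
abbrev M (X : Type) := List (Letter X)

/-- The operator `⌊ ⌋` on `𝔐(X)`. -/
def L {X : Type} (w : M X) : M X := [Letter.br w]

mutual
  /-- Substitute each variable by a word (letter version). -/
  def bindL {Y Z : Type} : Letter Y → (Y → M Z) → M Z
    | .of y, f => f y
    | .br w, f => [.br (bindW w f)]
  /-- Substitute each variable by a word (word version). -/
  def bindW {Y Z : Type} : M Y → (Y → M Z) → M Z
    | [], _ => []
    | a :: as, f => bindL a f ++ bindW as f
end

mutual
  /-- Count occurrences of variables satisfying `p` (letter version). -/
  def cntL {Y : Type} (p : Y → Bool) : Letter Y → ℕ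
    | .of y => if p y then 1 else 0
    | .br w => cntW p w
  /-- Count occurrences of variables satisfying `p` (word version). -/
  def cntW {Y : Type} (p : Y → Bool) : M Y → ℕ
    | [] => 0
    | a :: as => cntL p a + cntW p as
end

/-- The star letter `⋆`, modeled as `none`. -/
def starW {X : Type} : M (Option X) := [Letter.of none]

/-- `q` is a `⋆`-bracketed word: exactly one occurrence of `⋆`. -/
def IsStar {X : Type} (q : M (Option X)) : Prop :=
  cntW (fun o => o.isNone) q = 1

/-- Substitution `q|_u` of `u` for `⋆`. -/
def sub {X : Type} (q : M (Option X)) (u : M X) : M X :=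
  bindW q (fun o => Option.elim o u (fun x => [Letter.of x]))

/-- Embed `𝔐(X)` into `𝔐(X ∪ {⋆})`. -/
def emb {X : Type} (w : M X) : M (Option X) :=
  bindW w (fun x => [Letter.of (some x)])

/-- Substitute a `⋆`-word `r` for the `⋆` of `q`, yielding a word on `X ∪ {⋆}`. -/
def subS {X : Type} (q r : M (Option X)) : M (Option X) :=
  bindW q (fun o => Option.elim o r (fun x => [Letter.of (some x)]))

/-- `p` is a `(⋆₁,⋆₂)`-bracketed word (⋆₁ = `none`, ⋆₂ = `some none`). -/
def IsStar2 {X : Type} (p : M (Option (Option X))) : Prop :=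
  cntW (fun o => o.isNone) p = 1 ∧
  cntW (fun o => match o with | some none => true | _ => false) p = 1

/-- Substitution `p|_{u₁,u₂}`. -/
def sub2 {X : Type} (p : M (Option (Option X))) (u₁ u₂ : M X) : M X :=
  bindW p (fun o => match o with
    | none => u₁
    | some none => u₂
    | some (some x) => [Letter.of x])

/-- Substitution `p|_{u₁,⋆₂}`, a `⋆`-word. -/
def sub2L {X : Type} (p : M (Option (Option X))) (u₁ : M X) : M (Option X) :=
  bindW p (fun o => match o with
    | none => emb u₁
    | some none => [Letter.of none]
    | some (some x) => [Letter.of (some x)])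

/-- Substitution `p|_{⋆₁,u₂}`, a `⋆`-word. -/
def sub2R {X : Type} (p : M (Option (Option X))) (u₂ : M X) : M (Option X) :=
  bindW p (fun o => match o with
    | none => [Letter.of none]
    | some none => emb u₂
    | some (some x) => [Letter.of (some x)])

/-- `R^c`. -/
def Rc {X : Type} (R : Set (M X × M X)) : Set (M X × M X) :=
  {p | ∃ q a b, IsStar q ∧ (a, b) ∈ R ∧ p = (sub q a, sub q b)}

/-- Inverse relation `R⁻¹`. -/
def relInv {X : Type} (R : Set (M X × M X)) : Set (M X × M X) :=
  {p | (p.2, p.1) ∈ R}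

/-- Closure under right mult. (C1), left mult. (C2), and the operator (C3). -/
def Closed {X : Type} (S : Set (M X × M X)) : Prop :=
  ∀ a b, (a, b) ∈ S → ∀ c : M X,
    (a ++ c, b ++ c) ∈ S ∧ (c ++ a, c ++ b) ∈ S ∧ (L a, L b) ∈ S

/-- Composition of relations. -/
def relComp {X : Type} (R S : Set (M X × M X)) : Set (M X × M X) :=
  {p | ∃ c, (p.1, c) ∈ R ∧ (c, p.2) ∈ S}

/-- `relPow R n = R^(n+1)`. -/
def relPow {X : Type} (R : Set (M X × M X)) : ℕ → Set (M X × M X)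
  | 0 => R
  | n + 1 => relComp (relPow R n) R

/-- Operated congruence. -/
def IsOpCong {X : Type} (T : Set (M X × M X)) : Prop :=
  (∀ a, (a, a) ∈ T) ∧ (∀ a b, (a, b) ∈ T → (b, a) ∈ T) ∧
  (∀ a b c, (a, b) ∈ T → (b, c) ∈ T → (a, c) ∈ T) ∧ Closed T

/-- The operated congruence `⟨R⟩` generated by `R`. -/
def ocong {X : Type} (R : Set (M X × M X)) : Set (M X × M X) :=
  ⋂₀ {T | IsOpCong T ∧ R ⊆ T}

/-- Equivalence relation (as a set of pairs). -/
def IsEqv {X : Type} (T : Set (M X × M X)) : Prop :=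
  (∀ a, (a, a) ∈ T) ∧ (∀ a b, (a, b) ∈ T → (b, a) ∈ T) ∧
  (∀ a b c, (a, b) ∈ T → (b, c) ∈ T → (a, c) ∈ T)

/-- The equivalence `T^e` generated by `T`. -/
def eqgen {X : Type} (T : Set (M X × M X)) : Set (M X × M X) :=
  ⋂₀ {E | IsEqv E ∧ T ⊆ E}

/-- A monomial order: a well-founded linear order compatible with the operations. -/
def IsMonomialOrder {X : Type} (lt : M X → M X → Prop) : Prop :=
  WellFounded lt ∧
  (∀ a b, a = b ∨ lt a b ∨ lt b a) ∧
  (∀ a b c, lt a b → lt b c → lt a c) ∧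
  (∀ u v w, lt u v → lt (u ++ w) (v ++ w) ∧ lt (w ++ u) (w ++ v) ∧ lt (L u) (L v))

/-- The term-rewriting system `Π_S`. -/
def PiS {X : Type} (lt : M X → M X → Prop) (S : Set (M X × M X)) : Set (M X × M X) :=
  {p | ∃ q t v, IsStar q ∧ ((t, v) ∈ S ∨ (v, t) ∈ S) ∧ lt v t ∧ p = (sub q t, sub q v)}

/-- One-step rewriting. -/
def Rew {X : Type} (lt : M X → M X → Prop) (S : Set (M X × M X)) (a b : M X) : Prop :=
  (a, b) ∈ PiS lt S

/-- Joinability under `Π_S`. -/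
def Joinable {X : Type} (lt : M X → M X → Prop) (S : Set (M X × M X)) (f g : M X) : Prop :=
  ∃ h, Relation.ReflTransGen (Rew lt S) f h ∧ Relation.ReflTransGen (Rew lt S) g h

/-- Termination of `Π_S`. -/
def Terminating {X : Type} (lt : M X → M X → Prop) (S : Set (M X × M X)) : Prop :=
  ¬ ∃ f : ℕ → M X, ∀ n, Rew lt S (f n) (f (n + 1))

/-- Confluence of `Π_S`. -/
def Confluent {X : Type} (lt : M X → M X → Prop) (S : Set (M X × M X)) : Prop :=
  ∀ f g h, Relation.ReflTransGen (Rew lt S) f g → Relation.ReflTransGen (Rew lt S) f h →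
    Joinable lt S g h

/-- Irreducible elements: `𝔐(X) \ Dom(Π_S)`. -/
def Irr {X : Type} (lt : M X → M X → Prop) (S : Set (M X × M X)) : Set (M X) :=
  {f | ∀ g, ¬ Rew lt S f g}

/-- Predecessors of `a`. -/
def Pre {X : Type} (lt : M X → M X → Prop) (S : Set (M X × M X)) (a : M X) : Set (M X) :=
  {f | Relation.ReflTransGen (Rew lt S) f a}

/-- `W` is a section of `⟨S⟩`: every congruence class meets `W` in exactly one element. -/
def IsSection {X : Type} (S : Set (M X × M X)) (W : Set (M X)) : Prop :=
  ∀ a : M X, ∃! w, w ∈ W ∧ (a, w) ∈ ocong S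

/-- Separated placements `(u₁,q₁)`, `(u₂,q₂)` in `w`. -/
def Separated {X : Type} (u₁ : M X) (q₁ : M (Option X)) (u₂ : M X) (q₂ : M (Option X))
    (w : M X) : Prop :=
  ∃ p, IsStar2 p ∧ q₁ = sub2R p u₂ ∧ q₂ = sub2L p u₁ ∧ w = sub2 p u₁ u₂

/-- Nested placements: one context is a subcontext of the other. -/
def Nested {X : Type} (q₁ q₂ : M (Option X)) : Prop :=
  ∃ q, IsStar q ∧ (q₂ = subS q₁ q ∨ q₁ = subS q₂ q)

/-- Intersecting placements `(u₁,q₁)`, `(u₂,q₂)` in `w`. -/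
def Intersecting {X : Type} (w u₁ : M X) (q₁ : M (Option X)) (u₂ : M X)
    (q₂ : M (Option X)) : Prop :=
  ∃ q a b c, IsStar q ∧ a ≠ ([] : M X) ∧ b ≠ ([] : M X) ∧ c ≠ ([] : M X) ∧
    w = sub q (a ++ b ++ c) ∧
    ((q₁ = subS q (starW ++ emb c) ∧ q₂ = subS q (emb a ++ starW)) ∨
     (q₁ = subS q (emb a ++ starW) ∧ q₂ = subS q (starW ++ emb c)))

/-- Defining relations of the free `∗`-monoid. -/
def SStar (X : Type) : Set (M X × M X) :=
  {p | (∃ w : M X, p = (L (L w), w)) ∨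
       (∃ u v : M X, u ≠ [] ∧ v ≠ [] ∧ p = (L (u ++ v), L v ++ L u)) ∨
       p = (L [], [])}

/-- Defining relations of the free group. -/
def SGrp (X : Type) : Set (M X × M X) :=
  {p | (∃ w : M X, p = (L (L w), w)) ∨
       (∃ u v : M X, u ≠ [] ∧ v ≠ [] ∧ p = (L (u ++ v), L v ++ L u)) ∨
       (∃ w : M X, p = (L w ++ w, [])) ∨
       (∃ w : M X, p = (w ++ L w, []))}

/-!
Every left-hand side in `SStar X` is a single bracketed letter `⌊x⌋`. Cancelling the outer
context, one left-hand side occurs inside the other: `⌊x⌋ = q|⌊y⌋`. If `q = ⋆` the two rules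
overlap at the root, and the only non-trivial such overlap is `⌊u c v⌋` split in two ways, where
both sides reduce to `⌊v⌋⌊c⌋⌊u⌋`. Otherwise `⌊y⌋` lies strictly inside `⌊x⌋`. For
`⌊⌊w⌋⌋ → w` the inner rewrite commutes with erasing the double bracket, except when `⌊y⌋ = ⌊w⌋`,
where the right-hand side of the inner rule, bracketed, reduces back to `w`. For
`⌊u v⌋ → ⌊v⌋⌊u⌋` the inner rewrite happens inside `u` or inside `v` and can be replayed after
the swap. The left-hand side `⌊1⌋` contains no bracketed letter.
-/

section Words

variable {X : Type}

@[simp] lemma bindW_nil {Y Z : Type} (f : Y → M Z) : bindW [] f = [] := rfl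

@[simp] lemma bindW_cons {Y Z : Type} (a : Letter Y) (as : M Y) (f : Y → M Z) :
    bindW (a :: as) f = bindL a f ++ bindW as f := rfl

@[simp] lemma bindL_of {Y Z : Type} (y : Y) (f : Y → M Z) : bindL (.of y) f = f y := rfl

@[simp] lemma bindL_br {Y Z : Type} (w : M Y) (f : Y → M Z) :
    bindL (.br w) f = [.br (bindW w f)] := rfl

@[simp] lemma bindW_append {Y Z : Type} (a b : M Y) (f : Y → M Z) :
    bindW (a ++ b) f = bindW a f ++ bindW b f := by
  induction a with
  | nil => rfl
  | cons x xs ih => simp [ih]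

mutual
  lemma bindL_bindW {Y Z W : Type} (a : Letter Y) (f : Y → M Z) (g : Z → M W) :
      bindW (bindL a f) g = bindL a (fun y => bindW (f y) g) := by
    cases a with
    | of y => rfl
    | br w => simp [bindW_bindW w f g]
  lemma bindW_bindW {Y Z W : Type} (w : M Y) (f : Y → M Z) (g : Z → M W) :
      bindW (bindW w f) g = bindW w (fun y => bindW (f y) g) := by
    cases w with
    | nil => rfl
    | cons a as => simp [bindL_bindW a f g, bindW_bindW as f g]
end

mutual
  lemma bindL_pure {Y : Type} (a : Letter Y) : bindL a (fun y => [Letter.of y]) = [a] := by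
    cases a with
    | of y => rfl
    | br w => simp [bindW_pure w]
  lemma bindW_pure {Y : Type} (w : M Y) : bindW w (fun y => [Letter.of y]) = w := by
    cases w with
    | nil => rfl
    | cons a as => simp [bindL_pure a, bindW_pure as]
end

@[simp] lemma emb_nil : emb ([] : M X) = [] := rfl

@[simp] lemma emb_append (a b : M X) : emb (a ++ b) = emb a ++ emb b :=
  bindW_append a b _

@[simp] lemma sub_append (q r : M (Option X)) (u : M X) :
    sub (q ++ r) u = sub q u ++ sub r u :=
  bindW_append q r _

@[simp] lemma sub_starW (u : M X) : sub starW u = u := by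
  simp [sub, starW]

@[simp] lemma sub_br (q : M (Option X)) (u : M X) :
    sub [Letter.br q] u = L (sub q u) := by
  simp [sub, L]

@[simp] lemma sub_nil (u : M X) : sub ([] : M (Option X)) u = [] := rfl

@[simp] lemma sub_cons_br (q r : M (Option X)) (u : M X) :
    sub (Letter.br q :: r) u = Letter.br (sub q u) :: sub r u := rfl

@[simp] lemma sub_emb (a u : M X) : sub (emb a) u = a := by
  simpa [sub, emb, bindW_bindW] using bindW_pure a

lemma sub_subS (q r : M (Option X)) (u : M X) :
    sub (subS q r) u = sub q (sub r u) := by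
  simp only [sub, subS, bindW_bindW]
  congr 1
  funext o
  cases o <;> rfl

@[simp] lemma cntW_nil {Y : Type} (p : Y → Bool) : cntW p [] = 0 := rfl

@[simp] lemma cntW_cons {Y : Type} (p : Y → Bool) (a : Letter Y) (as : M Y) :
    cntW p (a :: as) = cntL p a + cntW p as := rfl

@[simp] lemma cntL_br {Y : Type} (p : Y → Bool) (w : M Y) : cntL p (.br w) = cntW p w := rfl

@[simp] lemma cntW_append {Y : Type} (p : Y → Bool) (a b : M Y) :
    cntW p (a ++ b) = cntW p a + cntW p b := by
  induction a with
  | nil => simp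
  | cons x xs ih => simp [ih]; omega

mutual
  lemma cntW_bindL_some (a : Letter X) :
      cntW (fun o => o.isNone) (bindL a (fun x => [Letter.of (some x)])) = 0 := by
    cases a with
    | of y => simp [cntL]
    | br w => simp [cntW_bindW_some w]
  lemma cntW_bindW_some (w : M X) :
      cntW (fun o => o.isNone) (bindW w (fun x => [Letter.of (some x)])) = 0 := by
    cases w with
    | nil => rfl
    | cons a as => simp [cntW_bindL_some a, cntW_bindW_some as]
end

@[simp] lemma cntW_emb (w : M X) : cntW (fun o => o.isNone) (emb w) = 0 :=
  cntW_bindW_some w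

mutual
  lemma cntW_bindL_subS (r : M (Option X)) (a : Letter (Option X)) :
      cntW (fun o => o.isNone) (bindL a (fun o => Option.elim o r (fun x => [Letter.of (some x)])))
        = cntL (fun o => o.isNone) a * cntW (fun o => o.isNone) r := by
    cases a with
    | of y => cases y <;> simp [cntL]
    | br w => simpa [subS] using cntW_subS r w
  lemma cntW_subS (r w : M (Option X)) :
      cntW (fun o => o.isNone) (subS w r)
        = cntW (fun o => o.isNone) w * cntW (fun o => o.isNone) r := by
    cases w with
    | nil => simp [subS]
    | cons a as =>
      have hcons : subS (a :: as) r = bindL a _ ++ subS as r := rfl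
      rw [hcons, cntW_append, cntW_bindL_subS r a, cntW_subS r as, cntW_cons]
      ring
end

lemma IsStar.subS {q r : M (Option X)} (hq : IsStar q) (hr : IsStar r) : IsStar (subS q r) := by
  rw [IsStar, cntW_subS, hq, hr]

mutual
  lemma exists_letter_eq_of_cntL_eq_zero (a : Letter (Option X))
      (h : cntL (fun o => o.isNone) a = 0) :
      ∃ b : Letter X, [a] = emb [b] := by
    cases a with
    | of y =>
      cases y with
      | none => simp [cntL] at h
      | some x => exact ⟨.of x, rfl⟩
    | br w =>
      obtain ⟨b, rfl⟩ := exists_eq_emb_of_cntW_eq_zero w h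
      exact ⟨.br b, rfl⟩
  lemma exists_eq_emb_of_cntW_eq_zero (w : M (Option X))
      (h : cntW (fun o => o.isNone) w = 0) :
      ∃ b : M X, w = emb b := by
    cases w with
    | nil => exact ⟨[], rfl⟩
    | cons a as =>
      simp only [cntW_cons, Nat.add_eq_zero_iff] at h
      obtain ⟨b, hb⟩ := exists_letter_eq_of_cntL_eq_zero a h.1
      obtain ⟨bs, rfl⟩ := exists_eq_emb_of_cntW_eq_zero as h.2
      exact ⟨b :: bs, by rw [← List.singleton_append, hb, ← emb_append]; rfl⟩
end

end Words

section Contexts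

variable {X : Type}

/-- Inductive form of `IsStar` (see `IsStar.isContext`). -/
inductive IsContext : M (Option X) → Prop
  | star (a b : M X) : IsContext (emb a ++ starW ++ emb b)
  | br (a b : M X) {q : M (Option X)} : IsContext q → IsContext (emb a ++ [Letter.br q] ++ emb b)

lemma IsContext.isStar {q : M (Option X)} (hq : IsContext q) : IsStar q := by
  induction hq with
  | star a b => simp [IsStar, starW, cntL]
  | br a b _ ih => simpa [IsStar] using ih

lemma IsContext.emb_append (c : M X) {q : M (Option X)} (hq : IsContext q) :
    IsContext (emb c ++ q) := by
  cases hq with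
  | star a b => simpa using IsContext.star (c ++ a) b
  | br a b hq => simpa using IsContext.br (c ++ a) b hq

lemma IsStar.isContext : ∀ q : M (Option X), IsStar q → IsContext q
  | [], h => by simp [IsStar] at h
  | .of none :: t, h => by
    obtain ⟨b, rfl⟩ := exists_eq_emb_of_cntW_eq_zero t (by simp [IsStar, cntL] at h; omega)
    simpa [starW] using IsContext.star [] b
  | .of (some x) :: t, h =>
    (IsStar.isContext t (by simpa [IsStar, cntL] using h)).emb_append [.of x]
  | .br w :: t, h => by
    simp only [IsStar, cntW_cons, cntL_br] at h
    rcases Nat.eq_zero_or_pos (cntW (fun o => o.isNone) w) with hw | hw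
    · obtain ⟨b, rfl⟩ := exists_eq_emb_of_cntW_eq_zero w hw
      exact (IsStar.isContext t (by simp only [IsStar]; omega)).emb_append [.br b]
    · obtain ⟨b, rfl⟩ := exists_eq_emb_of_cntW_eq_zero t (by omega)
      simpa using IsContext.br [] b (IsStar.isContext w (by simp only [IsStar]; omega))
termination_by q => sizeOf q

lemma IsContext.sub_injective {q : M (Option X)} (hq : IsContext q) :
    Function.Injective (sub q) := by
  induction hq with
  | star a b =>
    intro u v h
    simpa using h
  | br a b _ ih =>
    intro u v h
    exact ih (by simpa [L] using h)

lemma IsStar.sub_injective {q : M (Option X)} (hq : IsStar q) : Function.Injective (sub q) :=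
  (hq.isContext q).sub_injective

/-- A letter of `u ++ v` lies in `u` or in `v`. -/
lemma append_cons_eq_append {α : Type*} {a b u v : List α} {l : α} (h : a ++ l :: b = u ++ v) :
    (∃ c, b = c ++ v) ∨ (∃ c, a = u ++ c) := by
  rcases List.append_eq_append_iff.mp h with ⟨c, rfl, hc⟩ | ⟨c, rfl, -⟩
  · rcases c with _ | ⟨x, c⟩
    · exact Or.inr ⟨[], by simp⟩
    · exact Or.inl ⟨c, (List.cons_eq_cons.mp hc).2⟩
  · exact Or.inr ⟨c, rfl⟩

lemma IsContext.eq_append_emb_or_eq_emb_append {q : M (Option X)} (hq : IsContext q)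
    {y u v : M X} (h : sub q (L y) = u ++ v) :
    (∃ q₀, IsContext q₀ ∧ q = q₀ ++ emb v) ∨ (∃ q₀, IsContext q₀ ∧ q = emb u ++ q₀) := by
  cases hq with
  | star a b =>
    rcases append_cons_eq_append (by simpa [L] using h) with ⟨c, rfl⟩ | ⟨c, rfl⟩
    · exact Or.inl ⟨_, IsContext.star a c, by simp⟩
    · exact Or.inr ⟨_, IsContext.star c b, by simp⟩
  | br a b hq =>
    rcases append_cons_eq_append (by simpa [L] using h) with ⟨c, rfl⟩ | ⟨c, rfl⟩
    · exact Or.inl ⟨_, IsContext.br a c hq, by simp⟩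
    · exact Or.inr ⟨_, IsContext.br c b hq, by simp⟩

lemma L_eq_append_L_append {x y a b : M X} (h : L x = a ++ L y ++ b) :
    a = [] ∧ b = [] ∧ x = y := by
  have hlen := congrArg List.length h
  simp only [L, List.length_append, List.length_singleton] at hlen
  obtain ⟨rfl, rfl⟩ : a = [] ∧ b = [] := by
    simp only [← List.length_eq_zero_iff]; omega
  simpa [L] using h

end Contexts

section Rewriting

variable {X : Type} {lt : M X → M X → Prop} {S : Set (M X × M X)}

lemma rew_of_mem {t v : M X} (hS : (t, v) ∈ S) (hlt : lt v t) : Rew lt S t v :=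
  ⟨starW, t, v, (IsContext.star [] []).isStar, Or.inl hS, hlt, by simp⟩

lemma Rew.sub {a b : M X} (h : Rew lt S a b) {q : M (Option X)} (hq : IsStar q) :
    Rew lt S (sub q a) (sub q b) := by
  obtain ⟨r, t, v, hr, hS, hlt, hab⟩ := h
  obtain ⟨rfl, rfl⟩ := Prod.mk.inj hab
  exact ⟨subS q r, t, v, hq.subS hr, hS, hlt, by simp [sub_subS]⟩

lemma Rew.append_append {a b : M X} (h : Rew lt S a b) (c d : M X) :
    Rew lt S (c ++ a ++ d) (c ++ b ++ d) := by
  simpa using h.sub (IsContext.star c d).isStar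

lemma Rew.L {a b : M X} (h : Rew lt S a b) : Rew lt S (L a) (L b) := by
  simpa [OpMon.L] using h.sub (IsContext.br [] [] (IsContext.star [] [])).isStar

lemma reflTransGen_rew_sub {a b : M X} (h : Relation.ReflTransGen (Rew lt S) a b)
    {q : M (Option X)} (hq : IsStar q) :
    Relation.ReflTransGen (Rew lt S) (sub q a) (sub q b) :=
  h.lift (sub q) fun _ _ hab => hab.sub hq

lemma Joinable.refl (a : M X) : Joinable lt S a a :=
  ⟨a, .refl, .refl⟩

lemma Joinable.symm {a b : M X} (h : Joinable lt S a b) : Joinable lt S b a :=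
  let ⟨c, hac, hbc⟩ := h
  ⟨c, hbc, hac⟩

lemma Joinable.head {a b c : M X} (hab : Rew lt S a b) (h : Joinable lt S b c) :
    Joinable lt S a c :=
  let ⟨d, hbd, hcd⟩ := h
  ⟨d, .head hab hbd, hcd⟩

lemma Joinable.sub {a b : M X} (h : Joinable lt S a b) {q : M (Option X)} (hq : IsStar q) :
    Joinable lt S (sub q a) (sub q b) :=
  let ⟨c, hac, hbc⟩ := h
  ⟨OpMon.sub q c, reflTransGen_rew_sub hac hq, reflTransGen_rew_sub hbc hq⟩

end Rewriting

section StarMonoid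

variable {X : Type} {lt : M X → M X → Prop}

lemma L_injective : Function.Injective (L : M X → M X) := fun _ _ h => by
  simpa [L] using h

lemma L_ne_nil (w : M X) : L w ≠ [] := List.cons_ne_nil _ _

lemma L_ne_append {u v : M X} (hu : u ≠ []) (hv : v ≠ []) (w : M X) : L w ≠ u ++ v := by
  intro h
  have hlen := congrArg List.length h
  have := List.length_pos_iff.mpr hu
  have := List.length_pos_iff.mpr hv
  simp only [L, List.length_singleton, List.length_append] at hlen
  omega

lemma exists_fst_eq_L {α : M X × M X} (hα : α ∈ SStar X) : ∃ x, α.1 = L x := by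
  rcases hα with ⟨w, rfl⟩ | ⟨u, v, -, -, rfl⟩ | rfl <;> exact ⟨_, rfl⟩

lemma rew_of_mem_sstar (hor : ∀ p ∈ SStar X, lt p.2 p.1) {p : M X × M X} (hp : p ∈ SStar X) :
    Rew lt (SStar X) p.1 p.2 :=
  rew_of_mem hp (hor p hp)

lemma rew_L_L (hor : ∀ p ∈ SStar X, lt p.2 p.1) (w : M X) : Rew lt (SStar X) (L (L w)) w :=
  rew_of_mem_sstar hor (Or.inl ⟨w, rfl⟩)

lemma rew_L_append (hor : ∀ p ∈ SStar X, lt p.2 p.1) {u v : M X} (hu : u ≠ []) (hv : v ≠ []) :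
    Rew lt (SStar X) (L (u ++ v)) (L v ++ L u) :=
  rew_of_mem_sstar hor (Or.inr (Or.inl ⟨u, v, hu, hv, rfl⟩))

lemma rew_L_nil (hor : ∀ p ∈ SStar X, lt p.2 p.1) : Rew lt (SStar X) (L []) [] :=
  rew_of_mem_sstar hor (Or.inr (Or.inr rfl))

lemma joinable_L_append (hor : ∀ p ∈ SStar X, lt p.2 p.1) (u v : M X) :
    Joinable lt (SStar X) (L (u ++ v)) (L v ++ L u) := by
  by_cases hu : u = []
  · subst hu
    exact ⟨L v, .refl, .single (by simpa using (rew_L_nil hor).append_append (L v) [])⟩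
  by_cases hv : v = []
  · subst hv
    rw [List.append_nil]
    exact ⟨L u, .refl, .single (by simpa using (rew_L_nil hor).append_append [] (L u))⟩
  exact ⟨_, .single (rew_L_append hor hu hv), .refl⟩

/-- The overlap of `⌊u c v'⌋` split as `⌊u (c v')⌋` and as `⌊(u c) v'⌋`:
both sides reduce to `⌊v'⌋⌊c⌋⌊u⌋`. -/
lemma joinable_L_append_L_append (hor : ∀ p ∈ SStar X, lt p.2 p.1) {u c v : M X}
    (hu : u ≠ []) (hv : v ≠ []) :
    Joinable lt (SStar X) (L (c ++ v) ++ L u) (L v ++ L (u ++ c)) := by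
  by_cases hc : c = []
  · subst hc
    simpa using Joinable.refl _
  refine ⟨L v ++ L c ++ L u, .single ?_, .single ?_⟩
  · simpa using (rew_L_append hor hc hv).append_append [] (L u)
  · simpa using (rew_L_append hor hu hc).append_append (L v) []

lemma joinable_snd_of_fst_eq (hor : ∀ p ∈ SStar X, lt p.2 p.1) {α β : M X × M X}
    (hα : α ∈ SStar X) (hβ : β ∈ SStar X) (h : α.1 = β.1) :
    Joinable lt (SStar X) α.2 β.2 := by
  rcases hα with ⟨w, rfl⟩ | ⟨u, v, hu, hv, rfl⟩ | rfl <;>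
    rcases hβ with ⟨w', rfl⟩ | ⟨u', v', hu', hv', rfl⟩ | rfl <;> dsimp only at h ⊢
  · obtain rfl := L_injective (L_injective h)
    exact Joinable.refl _
  · exact absurd (L_injective h) (L_ne_append hu' hv' w)
  · exact absurd (L_injective h) (L_ne_nil w)
  · exact absurd (L_injective h).symm (L_ne_append hu hv w')
  · rcases List.append_eq_append_iff.mp (L_injective h) with ⟨c, rfl, rfl⟩ | ⟨c, rfl, rfl⟩
    · exact joinable_L_append_L_append hor hu hv'
    · exact (joinable_L_append_L_append hor hu' hv).symm
  · exact absurd (List.append_eq_nil_iff.mp (L_injective h)).1 hu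
  · exact absurd (L_injective h).symm (L_ne_nil w')
  · exact absurd (List.append_eq_nil_iff.mp (L_injective h).symm).1 hu'
  · exact Joinable.refl _

lemma reflTransGen_L_snd_of_fst_eq_L (hor : ∀ p ∈ SStar X, lt p.2 p.1) {β : M X × M X}
    (hβ : β ∈ SStar X) {w : M X} (h : β.1 = L w) :
    Relation.ReflTransGen (Rew lt (SStar X)) (L β.2) w := by
  rcases hβ with ⟨w', rfl⟩ | ⟨u, v, hu, hv, rfl⟩ | rfl <;> obtain rfl := L_injective h
  · exact .refl
  · have hLu : L u ≠ [] := L_ne_nil u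
    have hLv : L v ≠ [] := L_ne_nil v
    refine .head (rew_L_append hor hLv hLu) (.head (b := u ++ L (L v)) ?_ (.single ?_))
    · simpa using (rew_L_L hor u).append_append [] (L (L v))
    · simpa using (rew_L_L hor v).append_append u []
  · exact .single (rew_L_nil hor)

lemma joinable_of_fst_eq_L_sub (hor : ∀ p ∈ SStar X, lt p.2 p.1) {α β : M X × M X}
    (hα : α ∈ SStar X) (hβ : β ∈ SStar X) {q : M (Option X)} (hq : IsContext q)
    (h : α.1 = L (sub q β.1)) :
    Joinable lt (SStar X) α.2 (L (sub q β.2)) := by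
  obtain ⟨y, hy⟩ := exists_fst_eq_L hβ
  have hrule {q₀ : M (Option X)} (hq₀ : IsContext q₀) :
      Rew lt (SStar X) (sub q₀ β.1) (sub q₀ β.2) :=
    (rew_of_mem_sstar hor hβ).sub hq₀.isStar
  rcases hα with ⟨w, rfl⟩ | ⟨u, v, hu, hv, rfl⟩ | rfl <;> replace h := L_injective h <;>
    dsimp only at h ⊢
  · cases hq with
    | star a b =>
      obtain ⟨rfl, rfl, rfl⟩ := L_eq_append_L_append (by simpa [hy] using h)
      simpa using Joinable.symm ⟨w, reflTransGen_L_snd_of_fst_eq_L hor hβ hy, .refl⟩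
    | br a b hq' =>
      obtain ⟨rfl, rfl, rfl⟩ := L_eq_append_L_append (by simpa [L] using h)
      exact ⟨_, .single (hrule hq'), by simpa [L] using .single (rew_L_L hor _)⟩
  · rw [hy] at h
    rcases hq.eq_append_emb_or_eq_emb_append h.symm with ⟨q₀, hq₀, rfl⟩ | ⟨q₀, hq₀, rfl⟩
    · obtain rfl : u = sub q₀ (L y) := by simpa using h
      rw [← hy]
      simpa using Joinable.head ((hrule hq₀).L.append_append (L v) [])
        (joinable_L_append hor _ v).symm
    · obtain rfl : v = sub q₀ (L y) := by simpa using h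
      rw [← hy]
      simpa using Joinable.head ((hrule hq₀).L.append_append [] (L u))
        (joinable_L_append hor u _).symm
  · cases hq <;> simp [hy, L] at h

lemma joinable_of_fst_eq_sub (hor : ∀ p ∈ SStar X, lt p.2 p.1) {α β : M X × M X}
    (hα : α ∈ SStar X) (hβ : β ∈ SStar X) {q : M (Option X)} (hq : IsStar q)
    (h : α.1 = sub q β.1) :
    Joinable lt (SStar X) α.2 (sub q β.2) := by
  obtain ⟨x, hx⟩ := exists_fst_eq_L hα
  obtain ⟨y, hy⟩ := exists_fst_eq_L hβ
  cases hq.isContext q with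
  | star a b =>
    obtain ⟨rfl, rfl, rfl⟩ := L_eq_append_L_append (by simpa [hx, hy] using h)
    simpa using joinable_snd_of_fst_eq hor hα hβ (hx.trans hy.symm)
  | br a b hq' =>
    obtain ⟨rfl, rfl, hxq⟩ := L_eq_append_L_append (by simpa [L, hx] using h)
    simpa [L] using joinable_of_fst_eq_L_sub hor hα hβ hq' (hxq ▸ hx)

end StarMonoid

/-- nested placements of `∗`-monoid rules are joinable. -/
theorem sstar_nested_joinable (X : Type) (lt : M X → M X → Prop)
    (hlt : IsMonomialOrder lt) (hor : ∀ p ∈ SStar X, lt p.2 p.1)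
    (α β : M X × M X) (hα : α ∈ SStar X) (hβ : β ∈ SStar X)
    (q₁ q₂ : M (Option X)) (hq₁ : IsStar q₁) (hq₂ : IsStar q₂)
    (h : sub q₁ α.1 = sub q₂ β.1)
    (hnest : Nested q₁ q₂) :
    Joinable lt (SStar X) (sub q₁ α.2) (sub q₂ β.2) := by
  obtain ⟨q, hq, rfl | rfl⟩ := hnest
  · rw [sub_subS] at h ⊢
    exact (joinable_of_fst_eq_sub hor hα hβ hq (hq₁.sub_injective h)).sub hq₁
  · rw [sub_subS] at h ⊢
    exact ((joinable_of_fst_eq_sub hor hβ hα hq (hq₂.sub_injective h).symm).sub hq₂).symm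

end OpMon
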